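/- arXiv:2312.12279 — 4 statements merged into one kernel-verified Lean document; each statement's English description precedes it below -/
import Mathlib

section
/- Let d ∈ M with d ∉ A, and let d' ∈ M. If G(d/A) is strictly contained in G(d'/A), then G(d/A) is strictly contained in H(d'/A). -/
/-- `c` and `d` realize the same cut over the subgroup `A`. -/
def SameCut {M : Type*} [AddCommGroup M] [LinearOrder M] [IsOrderedAddMonoid M] (A : AddSubgroup M) (c d : M) : Prop :=
  ∀ a ∈ A, ((a ≤ c ↔ a ≤ d) ∧ (c ≤ a ↔ d ≤ a))

/-- `Stab(d/A)`: elements `a ∈ A` such that `d + a` and `d` realize the same cut over `A`. -/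
def Stab {M : Type*} [AddCommGroup M] [LinearOrder M] [IsOrderedAddMonoid M] (A : AddSubgroup M) (d : M) : Set M :=
  {a | a ∈ A ∧ SameCut A (d + a) d}

open Classical in
/-- `G(d/A)`. -/
def Gset {M : Type*} [AddCommGroup M] [LinearOrder M] [IsOrderedAddMonoid M] (A : AddSubgroup M) (d : M) : Set M :=
  if d ∈ A then ({0} : Set M)
  else {x | ∀ a ∈ A, a ∉ Stab A d → (-|a| < x ∧ x < |a|)}

/-- `H(d/A)`. -/
def Hset {M : Type*} [AddCommGroup M] [LinearOrder M] [IsOrderedAddMonoid M] (A : AddSubgroup M) (d : M) : Set M :=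
  {x | ∃ a ∈ Stab A d, |x| ≤ |a|}

/-- `Δ(x) ≤ Δ(y)`: `|x| ≤ n • |y|` for some natural number `n`. -/
def DeltaLe {M : Type*} [AddCommGroup M] [LinearOrder M] [IsOrderedAddMonoid M] (x y : M) : Prop :=
  ∃ n : ℕ, |x| ≤ n • |y|

/-- `Δ(x) = Δ(y)`. -/
def DeltaEq {M : Type*} [AddCommGroup M] [LinearOrder M] [IsOrderedAddMonoid M] (x y : M) : Prop :=
  DeltaLe x y ∧ DeltaLe y x

/-- `Δ(x) < Δ(y)`. -/
def DeltaLt {M : Type*} [AddCommGroup M] [LinearOrder M] [IsOrderedAddMonoid M] (x y : M) : Prop :=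
  DeltaLe x y ∧ ¬ DeltaLe y x

/-- `Δ(x) ∈ Δ(A)`. -/
def DeltaMem {M : Type*} [AddCommGroup M] [LinearOrder M] [IsOrderedAddMonoid M] (x : M) (A : AddSubgroup M) : Prop :=
  ∃ a ∈ A, DeltaEq x a

/-- `a` is a ramifier of `d` over `A`: `a ∈ A` and `Δ(d − a) ∉ Δ(A)`. -/
def IsRamifier {M : Type*} [AddCommGroup M] [LinearOrder M] [IsOrderedAddMonoid M] (A : AddSubgroup M) (d a : M) : Prop :=
  a ∈ A ∧ ¬ DeltaMem (d - a) A

/-- `d` is ramified over `A` if it admits a ramifier. -/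
def Ramified {M : Type*} [AddCommGroup M] [LinearOrder M] [IsOrderedAddMonoid M] (A : AddSubgroup M) (d : M) : Prop :=
  ∃ a, IsRamifier A d a

/-- `d` is cut-independent from `B` over `A`: every closed interval with bounds in `B`
containing `d` contains a point of `A`. -/
def CutIndep {M : Type*} [AddCommGroup M] [LinearOrder M] [IsOrderedAddMonoid M] (A B : AddSubgroup M) (d : M) : Prop :=
  ∀ b₁ ∈ B, ∀ b₂ ∈ B, b₁ ≤ d → d ≤ b₂ → ∃ a ∈ A, b₁ ≤ a ∧ a ≤ b₂

/-! Pick `x ∈ G(d'/A) \ G(d/A)`. Since `x ∉ G(d/A)`, some `a ∈ A \ Stab(d/A)` has `|a| ≤ |x|`;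
since `x ∈ G(d'/A)`, every element of `A \ Stab(d'/A)` is larger than `|x|` in absolute value,
so `a ∈ Stab(d'/A)`. Then `G(d/A)` lies below `|a|`, hence inside `H(d'/A)`, while `a` itself is
in `H(d'/A)` but not in `G(d/A)`. -/

section

variable {M : Type*} [AddCommGroup M] [LinearOrder M] [IsOrderedAddMonoid M]
  {A : AddSubgroup M} {d : M}

theorem zero_mem_Stab : (0 : M) ∈ Stab A d :=
  ⟨A.zero_mem, fun a _ => by simp⟩

theorem Gset_of_mem (hd : d ∈ A) : Gset A d = {0} := by
  simp [Gset, hd]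

theorem mem_Gset_iff_of_notMem (hd : d ∉ A) {x : M} :
    x ∈ Gset A d ↔ ∀ a ∈ A, a ∉ Stab A d → |x| < |a| := by
  simp only [Gset, hd, if_false, Set.mem_ofPred_eq, abs_lt]

theorem zero_mem_Gset : (0 : M) ∈ Gset A d := by
  by_cases hd : d ∈ A
  · simp [Gset_of_mem hd]
  · rw [mem_Gset_iff_of_notMem hd]
    intro a _ ha
    rw [abs_zero, abs_pos]
    rintro rfl
    exact ha zero_mem_Stab

theorem notMem_of_Gset_ssubset {d' : M} (h : Gset A d ⊂ Gset A d') : d' ∉ A := by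
  intro hd'
  rw [Gset_of_mem hd'] at h
  exact h.not_subset (Set.singleton_subset_iff.2 zero_mem_Gset)

theorem exists_abs_le_of_notMem_Gset (hd : d ∉ A) {x : M} (hx : x ∉ Gset A d) :
    ∃ a ∈ A, a ∉ Stab A d ∧ |a| ≤ |x| := by
  simpa only [mem_Gset_iff_of_notMem hd, not_forall, not_lt, exists_prop] using hx

theorem mem_Stab_of_abs_le_of_mem_Gset (hd : d ∉ A) {x a : M} (hx : x ∈ Gset A d)
    (ha : a ∈ A) (hax : |a| ≤ |x|) : a ∈ Stab A d := by
  by_contra hs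
  exact (hax.trans_lt ((mem_Gset_iff_of_notMem hd).1 hx a ha hs)).false

end

theorem Gset_ssubset_Hset_general (M : Type*) [AddCommGroup M] [LinearOrder M] [IsOrderedAddMonoid M]
    (A : AddSubgroup M)
    (d d' : M) (hd : d ∉ A)
    (hss : Gset A d ⊂ Gset A d') :
    Gset A d ⊂ Hset A d' := by
  obtain ⟨x, hx', hx⟩ := Set.exists_of_ssubset hss
  obtain ⟨a, haA, ha, hax⟩ := exists_abs_le_of_notMem_Gset hd hx
  have ha' : a ∈ Stab A d' :=
    mem_Stab_of_abs_le_of_mem_Gset (notMem_of_Gset_ssubset hss) hx' haA hax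
  have below_a : ∀ y ∈ Gset A d, |y| < |a| := fun y hy =>
    (mem_Gset_iff_of_notMem hd).1 hy a haA ha
  refine ⟨fun y hy => ⟨a, ha', (below_a y hy).le⟩, fun hsub => ?_⟩
  exact (below_a a (hsub ⟨a, ha', le_rfl⟩)).false

/-- If `G(d/A)` is strictly contained in `G(d'/A)`, then `G(d/A)` is strictly
contained in `H(d'/A)`. -/
theorem Gset_ssubset_Hset (M : Type*) [AddCommGroup M] [LinearOrder M] [IsOrderedAddMonoid M]
    (hMdiv : ∀ x : M, ∀ n : ℕ, 0 < n → ∃ y : M, n • y = x)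
    (A : AddSubgroup M)
    (hAdiv : ∀ a ∈ A, ∀ n : ℕ, 0 < n → ∃ b ∈ A, n • b = a)
    (d d' : M) (hd : d ∉ A)
    (hss : Gset A d ⊂ Gset A d') :
    Gset A d ⊂ Hset A d' :=
  Gset_ssubset_Hset_general M A d d' hd hss
end

section
/- Let d ∈ M with d ∉ A, and let a ∈ A. Then d − a ∉ H(d/A); that is, there is no a' ∈ Stab(d/A) with |d − a| ≤ |a'|. -/
/-! Translating `d` by an element of `Stab(d/A)` never crosses a point of `A`, so the closed
interval between `d` and `d ± |s|` meets `A` at most in `d` itself. If `|d − a| ≤ |s|`, the point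
`a ∈ A` lies in one of these two intervals, forcing `a = d ∈ A`. -/

section

variable {M : Type*} [AddCommGroup M] [LinearOrder M] [IsOrderedAddMonoid M] {A : AddSubgroup M}

theorem SameCut.eq_of_mem_uIcc {c d x : M} (h : SameCut A c d) (hx : x ∈ A)
    (hxcd : x ∈ Set.uIcc c d) : x = d := by
  rcases Set.mem_uIcc.1 hxcd with ⟨hcx, hxd⟩ | ⟨hdx, hxc⟩
  · exact le_antisymm hxd ((h x hx).2.1 hcx)
  · exact le_antisymm ((h x hx).1.1 hxc) hdx

theorem neg_mem_Stab {d s : M} (hs : s ∈ Stab A d) : -s ∈ Stab A d := by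
  refine ⟨A.neg_mem hs.1, fun x hx => ?_⟩
  have hcut := hs.2 (x + s) (A.add_mem hx hs.1)
  simp only [← sub_eq_add_neg, le_sub_iff_add_le, sub_le_iff_le_add, add_le_add_iff_right]
    at hcut ⊢
  exact ⟨hcut.1.symm, hcut.2.symm⟩

theorem abs_mem_Stab {d s : M} (hs : s ∈ Stab A d) : |s| ∈ Stab A d := by
  rcases abs_choice s with h | h <;> rw [h]
  exacts [hs, neg_mem_Stab hs]

theorem eq_of_mem_Stab_of_abs_sub_le {d a s : M} (hs : s ∈ Stab A d) (ha : a ∈ A)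
    (hle : |d - a| ≤ |s|) : a = d := by
  have habs := abs_mem_Stab hs
  obtain ⟨hlo, hhi⟩ := Set.mem_Icc_iff_abs_le.1 hle
  rcases le_total a d with had | hda
  · rw [sub_eq_add_neg] at hlo
    exact (neg_mem_Stab habs).2.eq_of_mem_uIcc ha (Set.mem_uIcc.2 (Or.inl ⟨hlo, had⟩))
  · exact habs.2.eq_of_mem_uIcc ha (Set.mem_uIcc.2 (Or.inr ⟨hda, hhi⟩))

end

theorem sub_not_mem_Hset_general (M : Type*) [AddCommGroup M] [LinearOrder M] [IsOrderedAddMonoid M]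
    (A : AddSubgroup M)
    (d : M) (hd : d ∉ A) (a : M) (ha : a ∈ A) :
    d - a ∉ Hset A d := by
  rintro ⟨s, hs, hle⟩
  exact hd (eq_of_mem_Stab_of_abs_sub_le hs ha hle ▸ ha)

/-- For `d ∉ A` and `a ∈ A`, `d − a ∉ H(d/A)`: there is no `a' ∈ Stab(d/A)`
with `|d − a| ≤ |a'|`. -/
theorem sub_not_mem_Hset (M : Type*) [AddCommGroup M] [LinearOrder M] [IsOrderedAddMonoid M]
    (hMdiv : ∀ x : M, ∀ n : ℕ, 0 < n → ∃ y : M, n • y = x)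
    (A : AddSubgroup M)
    (hAdiv : ∀ a ∈ A, ∀ n : ℕ, 0 < n → ∃ b ∈ A, n • b = a)
    (d : M) (hd : d ∉ A) (a : M) (ha : a ∈ A) :
    d - a ∉ Hset A d :=
  sub_not_mem_Hset_general M A d hd a ha
end

section
/- Let d, d' ∈ M. If d and d' realize the same cut over A, then d − d' ∈ G(d/A). -/
/-! Over `A`, two distinct points realize the same cut exactly when no point of `A` lies between
them, endpoints included. Translating `d` by `a ∈ A` with `|a| ≤ |d - d'|` keeps this: a point
`b ∈ A` between `d + a` and `d` would put `b` or `b - a` between `d` and `d'`. -/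

open Set

section SameCut

variable {M : Type*} [AddCommGroup M] [LinearOrder M] [IsOrderedAddMonoid M] {A : AddSubgroup M}

theorem sameCut_of_forall_notMem_uIcc {c d : M} (h : ∀ b ∈ A, b ∉ uIcc c d) : SameCut A c d := by
  intro b hb
  have hb_out := h b hb
  simp only [mem_uIcc, not_or, not_and_or, not_le] at hb_out
  constructor <;> constructor <;> intro <;> grind

theorem SameCut.eq_of_mem_uIcc_s7 {c d b : M} (h : SameCut A c d) (hb : b ∈ A) (hbcd : b ∈ uIcc c d) :
    c = d := by
  obtain ⟨hle, hge⟩ := h b hb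
  rcases mem_uIcc.mp hbcd with ⟨hcb, hbd⟩ | ⟨hdb, hbc⟩
  · exact le_antisymm (hcb.trans hbd) ((hge.mp hcb).trans (hle.mpr hbd))
  · exact le_antisymm ((hge.mpr hdb).trans (hle.mp hbc)) (hdb.trans hbc)

theorem SameCut.forall_notMem_uIcc {c d : M} (h : SameCut A c d) (hc : c ∉ A) :
    ∀ b ∈ A, b ∉ uIcc c d := by
  intro b hb hbcd
  obtain rfl := h.eq_of_mem_uIcc_s7 hb hbcd
  rw [uIcc_self, mem_singleton_iff] at hbcd
  exact hc (hbcd ▸ hb)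

theorem forall_notMem_uIcc_add_of_abs_le {d e a : M} (hgap : ∀ b ∈ A, b ∉ uIcc d e) (ha : a ∈ A)
    (hae : |a| ≤ |d - e|) : ∀ b ∈ A, b ∉ uIcc (d + a) d := by
  intro b hb hbd
  have hb_out := hgap b hb
  have hba_out := hgap (b - a) (A.sub_mem hb ha)
  simp only [mem_uIcc, not_or, not_and_or, not_le] at hb_out hba_out hbd
  rcases abs_cases a with ⟨ha, _⟩ | ⟨ha, _⟩ <;> rcases abs_cases (d - e) with ⟨he, _⟩ | ⟨he, _⟩ <;>
    rw [ha, he] at hae <;> grind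

theorem SameCut.add_of_abs_le_abs_sub {d e a : M} (h : SameCut A d e) (hd : d ∉ A) (ha : a ∈ A)
    (hae : |a| ≤ |d - e|) : SameCut A (d + a) d :=
  sameCut_of_forall_notMem_uIcc (forall_notMem_uIcc_add_of_abs_le (h.forall_notMem_uIcc hd) ha hae)

end SameCut

theorem sub_mem_Gset_of_sameCut_general (M : Type*) [AddCommGroup M] [LinearOrder M] [IsOrderedAddMonoid M]
    (A : AddSubgroup M)
    (d d' : M) (h : SameCut A d d') :
    d - d' ∈ Gset A d := by
  by_cases hd : d ∈ A
  · have hdd' : d = d' := h.eq_of_mem_uIcc_s7 hd left_mem_uIcc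
    rw [Gset, if_pos hd, hdd', sub_self]
    rfl
  · simp only [Gset, hd, if_false, mem_ofPred_eq, ← abs_lt]
    intro a ha haS
    by_contra! hle
    exact haS ⟨ha, h.add_of_abs_le_abs_sub hd ha hle⟩

/-- If `d` and `d'` realize the same cut over `A`, then `d − d' ∈ G(d/A)`. -/
theorem sub_mem_Gset_of_sameCut (M : Type*) [AddCommGroup M] [LinearOrder M] [IsOrderedAddMonoid M]
    (hMdiv : ∀ x : M, ∀ n : ℕ, 0 < n → ∃ y : M, n • y = x)
    (A : AddSubgroup M)
    (hAdiv : ∀ a ∈ A, ∀ n : ℕ, 0 < n → ∃ b ∈ A, n • b = a)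
    (d d' : M) (h : SameCut A d d') :
    d - d' ∈ Gset A d :=
  sub_mem_Gset_of_sameCut_general M A d d' h
end

section
/- Let d, d' ∈ M be such that G(d/A) = G(d'/A), d is Archimedean over A, and d' is ramified over A. Then G(d + d'/A) = G(d/A) and d + d' is Archimedean over A. -/
/-!
Let `a'` be a ramifier of `d'` and `ε = d' - a'`. Since `Δ(ε) ∉ Δ(A)`, no point of `A` comes
within `|a|` of `d'` for any `a ∈ A` with `|a| ≤ |ε|`, so all such `a` lie in `Stab(d'/A)`; hence
`ε ∈ G(d'/A) = G(d/A)`. As `d` is Archimedean and `A` is divisible, each `Δ(d - a)` with `a ∈ A`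
is some `Δ(c)`, `c ∈ A`, and shrinking `c` below `|ε|` would put it outside `Stab(d/A)` yet inside
`G(d/A)`; so `Δ(ε) < Δ(d - a)` for all `a ∈ A`. Then `d + ε` realizes the same cuts over `A`
as `d` (after any shift by `A`) and has the same values `Δ(d + ε - a) = Δ(d - a)`, and
`d + d' = (d + ε) + a'` differs from it by an element of `A`.
-/

section

variable {M : Type*} [AddCommGroup M] [LinearOrder M] [IsOrderedAddMonoid M]
  {A : AddSubgroup M}

theorem deltaLe_of_abs_le {x y : M} (h : |x| ≤ |y|) : DeltaLe x y :=
  ⟨1, by rwa [one_nsmul]⟩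

theorem abs_lt_abs_of_not_deltaLe {x y : M} (h : ¬ DeltaLe x y) : |y| < |x| :=
  not_le.1 fun hyx => h (deltaLe_of_abs_le hyx)

theorem DeltaLe.trans {x y z : M} : DeltaLe x y → DeltaLe y z → DeltaLe x z
  | ⟨n, hn⟩, ⟨m, hm⟩ => ⟨n * m, hn.trans <| by rw [mul_nsmul']; exact nsmul_le_nsmul_right hm n⟩

theorem DeltaEq.refl (x : M) : DeltaEq x x :=
  ⟨deltaLe_of_abs_le le_rfl, deltaLe_of_abs_le le_rfl⟩

theorem DeltaEq.symm {x y : M} (h : DeltaEq x y) : DeltaEq y x :=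
  ⟨h.2, h.1⟩

theorem DeltaEq.trans {x y z : M} (hxy : DeltaEq x y) (hyz : DeltaEq y z) : DeltaEq x z :=
  ⟨hxy.1.trans hyz.1, hyz.2.trans hxy.2⟩

theorem DeltaMem.of_deltaEq {x y : M} (hy : DeltaMem y A) (h : DeltaEq x y) : DeltaMem x A :=
  let ⟨a, ha, hya⟩ := hy
  ⟨a, ha, h.trans hya⟩

theorem deltaEq_add_of_not_deltaLe {x y : M} (h : ¬ DeltaLe x y) : DeltaEq (x + y) x := by
  have hy : 2 • |y| < |x| := not_le.1 fun hle => h ⟨2, hle⟩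
  have hle₁ := abs_add_le x y
  have hle₂ : |x| ≤ |x + y| + |y| := by simpa using abs_add_le (x + y) (-y)
  rw [two_nsmul] at hy
  exact ⟨⟨2, by rw [two_nsmul]; grind⟩, ⟨2, by rw [two_nsmul]; grind⟩⟩

theorem not_ramified_iff {d : M} : ¬ Ramified A d ↔ ∀ a ∈ A, DeltaMem (d - a) A := by
  simp [Ramified, IsRamifier]

theorem ramified_add_mem_iff {d a : M} (ha : a ∈ A) : Ramified A (d + a) ↔ Ramified A d := by
  constructor
  · rintro ⟨b, hb, hnot⟩
    exact ⟨b - a, A.sub_mem hb ha, by rwa [show d - (b - a) = d + a - b by abel]⟩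
  · rintro ⟨b, hb, hnot⟩
    exact ⟨b + a, A.add_mem hb ha, by rwa [show d + a - (b + a) = d - b by abel]⟩

theorem SameCut.refl (c : M) : SameCut A c c :=
  fun _ _ => ⟨Iff.rfl, Iff.rfl⟩

theorem SameCut.symm {c e : M} (h : SameCut A c e) : SameCut A e c :=
  fun a ha => ⟨(h a ha).1.symm, (h a ha).2.symm⟩

theorem SameCut.trans {c e f : M} (hce : SameCut A c e) (hef : SameCut A e f) : SameCut A c f :=
  fun a ha => ⟨(hce a ha).1.trans (hef a ha).1, (hce a ha).2.trans (hef a ha).2⟩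

theorem SameCut.add_right {c e a : M} (ha : a ∈ A) (h : SameCut A c e) :
    SameCut A (c + a) (e + a) := by
  intro x hx
  obtain ⟨hle, hge⟩ := h (x - a) (A.sub_mem hx ha)
  rw [← sub_le_iff_le_add, ← sub_le_iff_le_add, ← le_sub_iff_add_le, ← le_sub_iff_add_le]
  exact ⟨hle, hge⟩

theorem sameCut_add_right_iff {c e a : M} (ha : a ∈ A) :
    SameCut A (c + a) (e + a) ↔ SameCut A c e :=
  ⟨fun h => by simpa using h.add_right (A.neg_mem ha), SameCut.add_right ha⟩

theorem sameCut_add_of_lt_abs_sub {d ε : M} (h : ∀ a ∈ A, |ε| < |d - a|) :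
    SameCut A (d + ε) d := by
  intro a ha
  have hlt := h a ha
  have := le_abs_self ε
  have := neg_abs_le ε
  rcases abs_cases (d - a) with ⟨hda, _⟩ | ⟨hda, _⟩ <;> rw [hda] at hlt <;>
    exact ⟨⟨fun _ => by grind, fun _ => by grind⟩, ⟨fun _ => by grind, fun _ => by grind⟩⟩

def stabAddSubgroup (A : AddSubgroup M) (d : M) : AddSubgroup M where
  carrier := Stab A d
  zero_mem' := ⟨A.zero_mem, by rw [add_zero]; exact SameCut.refl d⟩
  add_mem' := fun ⟨hb, hbd⟩ ⟨hc, hcd⟩ =>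
    ⟨A.add_mem hb hc, by rw [← add_assoc]; exact (hbd.add_right hc).trans hcd⟩
  neg_mem' := fun ⟨hb, hbd⟩ =>
    ⟨A.neg_mem hb, by simpa using (hbd.add_right (A.neg_mem hb)).symm⟩

theorem stab_add_mem {d a : M} (ha : a ∈ A) : Stab A (d + a) = Stab A d := by
  ext b
  simp only [Stab, Set.mem_ofPred_eq]
  rw [show d + a + b = d + b + a by abel, sameCut_add_right_iff ha]

theorem stab_add_eq_of_lt_abs_sub {d ε : M} (h : ∀ a ∈ A, |ε| < |d - a|) :
    Stab A (d + ε) = Stab A d := by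
  have hshift : ∀ b ∈ A, SameCut A (d + b + ε) (d + b) := fun b hb =>
    sameCut_add_of_lt_abs_sub fun a ha => by
      simpa [show d + b - a = d - (a - b) by abel] using h (a - b) (A.sub_mem ha hb)
  have hd : SameCut A (d + ε) d := by simpa using hshift 0 A.zero_mem
  ext b
  simp only [Stab, Set.mem_ofPred_eq, show d + ε + b = d + b + ε by abel]
  exact and_congr_right fun hb =>
    ⟨fun h' => ((hshift b hb).symm.trans h').trans hd,
      fun h' => ((hshift b hb).trans h').trans hd.symm⟩

theorem lt_abs_sub_of_mem_stab {d s a : M} (hd : d ∉ A) (hs : s ∈ Stab A d) (ha : a ∈ A) :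
    |s| < |d - a| := by
  have habs : |s| ∈ Stab A d := abs_mem_iff (H := stabAddSubgroup A d).2 hs
  have hneg : -|s| ∈ Stab A d := (stabAddSubgroup A d).neg_mem habs
  by_contra! hle
  obtain ⟨hlo, hhi⟩ := abs_le.1 hle
  have had : a ≤ d := ((habs.2 a ha).1).1 (by grind)
  have hda : d ≤ a := ((hneg.2 a ha).2).1 (by grind)
  exact hd (le_antisymm hda had ▸ ha)

theorem not_deltaLe_of_mem_stab {d s a : M} (hd : d ∉ A) (hs : s ∈ Stab A d) (ha : a ∈ A) :
    ¬ DeltaLe (d - a) s := fun ⟨n, hn⟩ =>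
  (lt_abs_sub_of_mem_stab hd ((stabAddSubgroup A d).nsmul_mem hs n) ha).not_ge
    (by rwa [abs_nsmul])

theorem mem_gset_iff {d x : M} (hd : d ∉ A) :
    x ∈ Gset A d ↔ ∀ a ∈ A, a ∉ Stab A d → |x| < |a| := by
  simp only [Gset, if_neg hd, Set.mem_ofPred_eq, abs_lt]

theorem notMem_of_mem_gset {d x : M} (hx : x ∈ Gset A d) (hx0 : x ≠ 0) : d ∉ A :=
  fun hd => hx0 (by simpa [Gset, hd] using hx)

theorem gset_add_mem {d a : M} (ha : a ∈ A) : Gset A (d + a) = Gset A d := by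
  by_cases hd : d ∈ A
  · simp only [Gset, if_pos hd, if_pos (A.add_mem hd ha)]
  · have hda : d + a ∉ A := fun h => hd (by simpa using A.sub_mem h ha)
    simp only [Gset, if_neg hd, if_neg hda, stab_add_mem ha]

theorem gset_add_eq_of_lt_abs_sub {d ε : M} (h : ∀ a ∈ A, |ε| < |d - a|) :
    Gset A (d + ε) = Gset A d := by
  have hd : d ∉ A := fun hd => (h d hd).not_ge (by simp)
  have hdε : d + ε ∉ A := fun hdε => by simpa using h (d + ε) hdε
  simp only [Gset, if_neg hd, if_neg hdε, stab_add_eq_of_lt_abs_sub h]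

theorem IsRamifier.notMem {d a : M} (h : IsRamifier A d a) : d ∉ A :=
  fun hd => h.2 ⟨d - a, A.sub_mem hd h.1, DeltaEq.refl _⟩

theorem IsRamifier.sub_ne_zero {d a : M} (h : IsRamifier A d a) : d - a ≠ 0 :=
  fun h0 => h.2 ⟨0, A.zero_mem, by rw [h0]; exact DeltaEq.refl 0⟩

theorem IsRamifier.lt_abs_sub {d a b c : M} (h : IsRamifier A d a) (hb : b ∈ A)
    (hba : |b| ≤ |d - a|) (hc : c ∈ A) : |b| < |d - c| := by
  by_contra! hdc
  have hb' : ¬ DeltaLe (d - a) b := fun hle => h.2 ⟨b, hb, hle, deltaLe_of_abs_le hba⟩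
  have hc' : ¬ DeltaLe (d - a) (c - d) := fun hle =>
    hb' (hle.trans (deltaLe_of_abs_le (by rwa [abs_sub_comm])))
  have hca := deltaEq_add_of_not_deltaLe hc'
  rw [show d - a + (c - d) = c - a by abel] at hca
  exact h.2 ⟨c - a, A.sub_mem hc h.1, hca.symm⟩

theorem IsRamifier.mem_stab {d a b : M} (h : IsRamifier A d a) (hb : b ∈ A)
    (hba : |b| ≤ |d - a|) : b ∈ Stab A d :=
  ⟨hb, sameCut_add_of_lt_abs_sub fun _ hc => h.lt_abs_sub hb hba hc⟩

theorem IsRamifier.sub_mem_gset {d a : M} (h : IsRamifier A d a) : d - a ∈ Gset A d :=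
  (mem_gset_iff h.notMem).2 fun _ hb hs => not_le.1 fun hba => hs (h.mem_stab hb hba)

theorem exists_deltaEq_abs_le (hAdiv : ∀ a ∈ A, ∀ n : ℕ, 0 < n → ∃ b ∈ A, n • b = a)
    {c y : M} (hc : c ∈ A) (h : DeltaLe c y) : ∃ b ∈ A, DeltaEq b c ∧ |b| ≤ |y| := by
  obtain ⟨n, hn⟩ := h
  obtain ⟨b, hb, rfl⟩ := hAdiv c hc (n + 1) n.succ_pos
  have habs : |(n + 1) • b| = (n + 1) • |b| := abs_nsmul (n + 1) b
  refine ⟨b, hb, ⟨deltaLe_of_abs_le ?_, ⟨n + 1, habs.le⟩⟩, ?_⟩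
  · simpa [habs] using nsmul_le_nsmul_left (abs_nonneg b) n.succ_pos
  · refine (nsmul_le_nsmul_iff_right n.succ_ne_zero).1 ?_
    calc (n + 1) • |b| = |(n + 1) • b| := habs.symm
      _ ≤ n • |y| := hn
      _ ≤ (n + 1) • |y| := nsmul_le_nsmul_left (abs_nonneg y) n.le_succ

theorem not_deltaLe_of_mem_gset (hAdiv : ∀ a ∈ A, ∀ n : ℕ, 0 < n → ∃ b ∈ A, n • b = a)
    {d x a : M} (hArch : ¬ Ramified A d) (hd : d ∉ A) (hx : x ∈ Gset A d) (ha : a ∈ A) :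
    ¬ DeltaLe (d - a) x := by
  intro hle
  obtain ⟨c, hc, hdc⟩ := not_ramified_iff.1 hArch a ha
  obtain ⟨b, hb, hbc, hbx⟩ := exists_deltaEq_abs_le hAdiv hc (hdc.2.trans hle)
  have hs : b ∉ Stab A d := fun hs => not_deltaLe_of_mem_stab hd hs ha (hdc.1.trans hbc.2)
  exact ((mem_gset_iff hd).1 hx b hb hs).not_ge hbx

theorem not_ramified_add_of_not_deltaLe {d ε : M} (hArch : ¬ Ramified A d)
    (h : ∀ a ∈ A, ¬ DeltaLe (d - a) ε) : ¬ Ramified A (d + ε) := by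
  refine not_ramified_iff.2 fun a ha => ?_
  rw [show d + ε - a = d - a + ε by abel]
  exact (not_ramified_iff.1 hArch a ha).of_deltaEq (deltaEq_add_of_not_deltaLe (h a ha))

end

theorem arch_add_ramified_general (M : Type*) [AddCommGroup M] [LinearOrder M] [IsOrderedAddMonoid M]
    (A : AddSubgroup M)
    (hAdiv : ∀ a ∈ A, ∀ n : ℕ, 0 < n → ∃ b ∈ A, n • b = a)
    (d d' : M) (hG : Gset A d = Gset A d')
    (hdArch : ¬ Ramified A d) (hd'Ram : Ramified A d') :
    Gset A (d + d') = Gset A d ∧ ¬ Ramified A (d + d') := by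
  obtain ⟨a', hram⟩ := hd'Ram
  have hεG : d' - a' ∈ Gset A d := hG ▸ hram.sub_mem_gset
  have hd : d ∉ A := notMem_of_mem_gset hεG hram.sub_ne_zero
  have hsmall : ∀ a ∈ A, ¬ DeltaLe (d - a) (d' - a') := fun a ha =>
    not_deltaLe_of_mem_gset hAdiv hdArch hd hεG ha
  rw [show d + d' = d + (d' - a') + a' by abel, gset_add_mem hram.1, ramified_add_mem_iff hram.1]
  exact ⟨gset_add_eq_of_lt_abs_sub fun a ha => abs_lt_abs_of_not_deltaLe (hsmall a ha),
    not_ramified_add_of_not_deltaLe hdArch hsmall⟩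

/-- If `G(d/A) = G(d'/A)`, `d` is Archimedean over `A` and `d'` is ramified over `A`,
then `G(d + d'/A) = G(d/A)` and `d + d'` is Archimedean over `A`. -/
theorem arch_add_ramified (M : Type*) [AddCommGroup M] [LinearOrder M] [IsOrderedAddMonoid M]
    (hMdiv : ∀ x : M, ∀ n : ℕ, 0 < n → ∃ y : M, n • y = x)
    (A : AddSubgroup M)
    (hAdiv : ∀ a ∈ A, ∀ n : ℕ, 0 < n → ∃ b ∈ A, n • b = a)
    (d d' : M) (hG : Gset A d = Gset A d')
    (hdArch : ¬ Ramified A d) (hd'Ram : Ramified A d') :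
    Gset A (d + d') = Gset A d ∧ ¬ Ramified A (d + d') :=
  arch_add_ramified_general M A hAdiv d d' hG hdArch hd'Ram
end
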